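/- arXiv:2205.13166 — 5 statements merged into one kernel-verified Lean document; each statement's English description precedes it below -/
import Mathlib

section
/- Let X be a type, n ≥ 1, and let (x_i, y_i) ∈ X × ℝ for i = 1,…,n be fixed samples. Let H be a nonempty set of functions X → ℝ, let k ≥ 1, μ ≥ 0, and let ℓ : ℝ → ℝ → ℝ be μ-Lipschitz in its second argument. Assume there is B ≥ 0 such that |h(x_i)| ≤ B and |ℓ(y_i, h(x_i))| ≤ B for all h ∈ H and all i. Then the (unnormalized) empirical Rademacher complexity of the k-list min-loss class is at most kμ times that of the base class: 2^{-n} · Σ_{σ ∈ {−1,1}^n} sup_{(h₁,…,h_k) ∈ H^k} Σ_{i=1}^n σ_i · (min_{j ∈ {1,…,k}} ℓ(y_i, h_j(x_i))) ≤ k · μ · 2^{-n} · Σ_{σ ∈ {−1,1}^n} sup_{h ∈ H} Σ_{i=1}^n σ_i · h(x_i). -/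
open Finset

namespace RadAux

variable {n : ℕ} {α : Type*}

noncomputable def sg (σ : Fin n → Bool) (i : Fin n) : ℝ := if σ i then 1 else -1

lemma abs_sg (σ : Fin n → Bool) (i : Fin n) : |sg σ i| = 1 := by
  unfold sg; split <;> simp

def radSet (T : Set (Fin n → α)) (f : ∀ _ : Fin n, α → ℝ) (σ : Fin n → Bool) : Set ℝ :=
  (fun t => ∑ i, sg σ i * f i (t i)) '' T

noncomputable def rad (T : Set (Fin n → α)) (f : ∀ _ : Fin n, α → ℝ) : ℝ :=
  ∑ σ : Fin n → Bool, sSup (radSet T f σ)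

lemma radSet_nonempty {T : Set (Fin n → α)} (hT : T.Nonempty) (f : ∀ _ : Fin n, α → ℝ)
    (σ : Fin n → Bool) : (radSet T f σ).Nonempty := hT.image _

lemma radSet_bddAbove {T : Set (Fin n → α)} {f : ∀ _ : Fin n, α → ℝ} {C : ℝ}
    (hb : ∀ t ∈ T, ∀ i, |f i (t i)| ≤ C) (σ : Fin n → Bool) : BddAbove (radSet T f σ) := by
  refine ⟨n * C, ?_⟩
  rintro s ⟨t, ht, rfl⟩
  calc ∑ i, sg σ i * f i (t i) ≤ ∑ i, |sg σ i * f i (t i)| :=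
        Finset.sum_le_sum fun i _ => le_abs_self _
    _ ≤ ∑ _i : Fin n, C := by
        refine Finset.sum_le_sum fun i _ => ?_
        rw [abs_mul, abs_sg, one_mul]; exact hb t ht i
    _ = n * C := by simp [mul_comm]

lemma rad_add_le {T : Set (Fin n → α)} (hT : T.Nonempty) {f g : ∀ _ : Fin n, α → ℝ} {Cf Cg : ℝ}
    (hbf : ∀ t ∈ T, ∀ i, |f i (t i)| ≤ Cf) (hbg : ∀ t ∈ T, ∀ i, |g i (t i)| ≤ Cg) :
    rad T (fun i a => f i a + g i a) ≤ rad T f + rad T g := by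
  unfold rad
  rw [← Finset.sum_add_distrib]
  refine Finset.sum_le_sum fun σ _ => ?_
  refine csSup_le (radSet_nonempty hT _ σ) ?_
  rintro s ⟨t, ht, rfl⟩
  dsimp only
  have : ∑ i, sg σ i * (f i (t i) + g i (t i))
      = (∑ i, sg σ i * f i (t i)) + ∑ i, sg σ i * g i (t i) := by
    rw [← Finset.sum_add_distrib]; exact Finset.sum_congr rfl fun i _ => by ring
  rw [this]
  exact add_le_add (le_csSup (radSet_bddAbove hbf σ) ⟨t, ht, rfl⟩)
    (le_csSup (radSet_bddAbove hbg σ) ⟨t, ht, rfl⟩)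

lemma rad_smul_le {T : Set (Fin n → α)} (hT : T.Nonempty) {f : ∀ _ : Fin n, α → ℝ} {C c : ℝ}
    (hc : 0 ≤ c) (hbf : ∀ t ∈ T, ∀ i, |f i (t i)| ≤ C) :
    rad T (fun i a => c * f i a) ≤ c * rad T f := by
  unfold rad
  rw [Finset.mul_sum]
  refine Finset.sum_le_sum fun σ _ => ?_
  refine csSup_le (radSet_nonempty hT _ σ) ?_
  rintro s ⟨t, ht, rfl⟩
  dsimp only
  have : ∑ i, sg σ i * (c * f i (t i)) = c * ∑ i, sg σ i * f i (t i) := by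
    rw [Finset.mul_sum]; exact Finset.sum_congr rfl fun i _ => by ring
  rw [this]
  exact mul_le_mul_of_nonneg_left (le_csSup (radSet_bddAbove hbf σ) ⟨t, ht, rfl⟩) hc

lemma rad_neg (T : Set (Fin n → α)) (f : ∀ _ : Fin n, α → ℝ) :
    rad T (fun i a => -(f i a)) = rad T f := by
  have hset : ∀ σ : Fin n → Bool,
      radSet T (fun i a => -(f i a)) σ = radSet T f (fun i => !σ i) := by
    intro σ
    unfold radSet
    have h : ∀ t : Fin n → α, (∑ i, sg σ i * (fun i a => -(f i a)) i (t i))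
        = ∑ i, sg (fun i => !σ i) i * f i (t i) := by
      intro t
      refine Finset.sum_congr rfl fun i _ => ?_
      unfold sg
      cases h : σ i <;> simp [h]
    exact Set.image_congr fun t _ => h t
  unfold rad
  calc ∑ σ : Fin n → Bool, sSup (radSet T (fun i a => -(f i a)) σ)
      = ∑ σ : Fin n → Bool, sSup (radSet T f (fun i => !σ i)) :=
        Finset.sum_congr rfl fun σ _ => by rw [hset σ]
    _ = ∑ σ : Fin n → Bool, sSup (radSet T f σ) :=
        Fintype.sum_bijective (fun σ : Fin n → Bool => fun i => !σ i)
          (Function.Involutive.bijective fun σ => by funext i; simp)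
          _ _ (fun σ => rfl)


lemma four_sup {β : Type*} (S : Set β) (hS : S.Nonempty) (F G R : β → ℝ)
    (b1 : BddAbove ((fun t => F t + R t) '' S)) (b2 : BddAbove ((fun t => -F t + R t) '' S))
    (b3 : BddAbove ((fun t => G t + R t) '' S)) (b4 : BddAbove ((fun t => -G t + R t) '' S))
    (hFG : ∀ a ∈ S, ∀ b ∈ S, F a - F b ≤ |G a - G b|) :
    sSup ((fun t => F t + R t) '' S) + sSup ((fun t => -F t + R t) '' S) ≤
      sSup ((fun t => G t + R t) '' S) + sSup ((fun t => -G t + R t) '' S) := by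
  set RHS := sSup ((fun t => G t + R t) '' S) + sSup ((fun t => -G t + R t) '' S) with hR
  have key : ∀ t ∈ S, ∀ t' ∈ S, (F t + R t) + (-F t' + R t') ≤ RHS := by
    intro t ht t' ht'
    have h1 := hFG t ht t' ht'
    rcases le_total (G t') (G t) with h | h
    · have h2 : F t - F t' ≤ G t - G t' := by
        rwa [abs_of_nonneg (by linarith)] at h1
      have e1 : G t + R t ≤ sSup ((fun t => G t + R t) '' S) := le_csSup b3 ⟨t, ht, rfl⟩
      have e2 : -G t' + R t' ≤ sSup ((fun t => -G t + R t) '' S) := le_csSup b4 ⟨t', ht', rfl⟩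
      linarith
    · have h2 : F t - F t' ≤ G t' - G t := by
        rw [abs_of_nonpos (by linarith)] at h1; linarith
      have e1 : G t' + R t' ≤ sSup ((fun t => G t + R t) '' S) := le_csSup b3 ⟨t', ht', rfl⟩
      have e2 : -G t + R t ≤ sSup ((fun t => -G t + R t) '' S) := le_csSup b4 ⟨t, ht, rfl⟩
      linarith
  have hA : sSup ((fun t => F t + R t) '' S)
      ≤ RHS - sSup ((fun t => -F t + R t) '' S) := by
    refine csSup_le (hS.image _) ?_
    rintro a ⟨t, ht, rfl⟩
    have hB2 : sSup ((fun t => -F t + R t) '' S) ≤ RHS - (F t + R t) := by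
      refine csSup_le (hS.image _) ?_
      rintro b ⟨t', ht', rfl⟩
      have := key t ht t' ht'
      dsimp only at this ⊢
      linarith
    dsimp only
    linarith
  linarith

lemma rad_step {T : Set (Fin n → α)} (hT : T.Nonempty) (u v : ∀ _ : Fin n, α → ℝ) {C : ℝ}
    (hbu : ∀ t ∈ T, ∀ i, |u i (t i)| ≤ C) (hbv : ∀ t ∈ T, ∀ i, |v i (t i)| ≤ C)
    (i₀ : Fin n) (hagree : ∀ i, i ≠ i₀ → u i = v i)
    (hcmp : ∀ a b : α, |u i₀ a - u i₀ b| ≤ |v i₀ a - v i₀ b|) :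
    rad T u ≤ rad T v := by
  classical
  set flip : (Fin n → Bool) → (Fin n → Bool) :=
    fun σ => Function.update σ i₀ (!σ i₀) with hflipdef
  have hinv : Function.Involutive flip := by
    intro σ
    funext i
    by_cases h : i = i₀
    · subst h; simp [flip, Function.update_self]
    · simp [flip, Function.update_of_ne h]
  have hsgflip_ne : ∀ σ (i : Fin n), i ≠ i₀ → sg (flip σ) i = sg σ i := by
    intro σ i h
    unfold sg
    rw [hflipdef]
    simp [Function.update_of_ne h]
  have hsgflip : ∀ σ, sg (flip σ) i₀ = -sg σ i₀ := by
    intro σ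
    unfold sg
    rw [hflipdef]
    simp only [Function.update_self]
    cases h : σ i₀ <;> simp [h]
  -- decomposition of radSet
  have hdec : ∀ (w : ∀ _ : Fin n, α → ℝ) (σ : Fin n → Bool),
      radSet T w σ = (fun t => sg σ i₀ * w i₀ (t i₀)
        + ∑ i ∈ univ.erase i₀, sg σ i * w i (t i)) '' T := by
    intro w σ
    unfold radSet
    refine Set.image_congr fun t _ => ?_
    exact (Finset.add_sum_erase _ _ (mem_univ i₀)).symm
  have pair : ∀ σ : Fin n → Bool,
      sSup (radSet T u σ) + sSup (radSet T u (flip σ)) ≤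
        sSup (radSet T v σ) + sSup (radSet T v (flip σ)) := by
    intro σ
    set R : (Fin n → α) → ℝ := fun t => ∑ i ∈ univ.erase i₀, sg σ i * u i (t i) with hRdef
    have hRbd : ∀ t ∈ T, |R t| ≤ n * C := by
      intro t ht
      rw [hRdef]
      calc |∑ i ∈ univ.erase i₀, sg σ i * u i (t i)|
          ≤ ∑ i ∈ univ.erase i₀, |sg σ i * u i (t i)| := Finset.abs_sum_le_sum_abs _ _
        _ ≤ ∑ i ∈ univ.erase i₀, C := by
            refine Finset.sum_le_sum fun i _ => ?_
            rw [abs_mul, abs_sg, one_mul]; exact hbu t ht i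
        _ ≤ ∑ _i : Fin n, C := by
            rcases le_or_gt 0 C with h | h
            · exact Finset.sum_le_sum_of_subset_of_nonneg (Finset.erase_subset _ _)
                (fun _ _ _ => h)
            · exfalso
              obtain ⟨t0, ht0⟩ := hT
              linarith [abs_nonneg (u i₀ (t0 i₀)), hbu t0 ht0 i₀]
        _ = n * C := by simp [mul_comm]
    have eRv : ∀ t : Fin n → α,
        (∑ i ∈ univ.erase i₀, sg σ i * v i (t i)) = R t := by
      intro t
      rw [hRdef]
      exact Finset.sum_congr rfl fun i hi => by
        rw [hagree i (Finset.ne_of_mem_erase hi)]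
    have eRflip : ∀ (w : ∀ _ : Fin n, α → ℝ) (t : Fin n → α),
        (∑ i ∈ univ.erase i₀, sg (flip σ) i * w i (t i))
          = ∑ i ∈ univ.erase i₀, sg σ i * w i (t i) := by
      intro w t
      exact Finset.sum_congr rfl fun i hi => by
        rw [hsgflip_ne σ i (Finset.ne_of_mem_erase hi)]
    set F : (Fin n → α) → ℝ := fun t => sg σ i₀ * u i₀ (t i₀) with hF
    set G : (Fin n → α) → ℝ := fun t => sg σ i₀ * v i₀ (t i₀) with hG
    have e1 : radSet T u σ = (fun t => F t + R t) '' T := hdec u σ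
    have e2 : radSet T u (flip σ) = (fun t => -F t + R t) '' T := by
      rw [hdec u (flip σ)]
      refine Set.image_congr fun t _ => ?_
      rw [hsgflip σ, eRflip u t, hF, hRdef]
      ring_nf
    have e3 : radSet T v σ = (fun t => G t + R t) '' T := by
      rw [hdec v σ]
      refine Set.image_congr fun t _ => ?_
      rw [eRv t]
    have e4 : radSet T v (flip σ) = (fun t => -G t + R t) '' T := by
      rw [hdec v (flip σ)]
      refine Set.image_congr fun t _ => ?_
      rw [hsgflip σ, eRflip v t, eRv t, hG]
      ring_nf
    rw [e1, e2, e3, e4]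
    refine four_sup T hT F G R (e1 ▸ radSet_bddAbove hbu σ)
      (e2 ▸ radSet_bddAbove hbu (flip σ)) (e3 ▸ radSet_bddAbove hbv σ)
      (e4 ▸ radSet_bddAbove hbv (flip σ)) ?_
    intro a ha b hb
    have h1 : F a - F b = sg σ i₀ * (u i₀ (a i₀) - u i₀ (b i₀)) := by rw [hF]; ring
    have h2 : |G a - G b| = |v i₀ (a i₀) - v i₀ (b i₀)| := by
      rw [hG]
      rw [show sg σ i₀ * v i₀ (a i₀) - sg σ i₀ * v i₀ (b i₀)
        = sg σ i₀ * (v i₀ (a i₀) - v i₀ (b i₀)) by ring]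
      rw [abs_mul, abs_sg, one_mul]
    calc F a - F b ≤ |F a - F b| := le_abs_self _
      _ = |u i₀ (a i₀) - u i₀ (b i₀)| := by
          rw [h1, abs_mul, abs_sg, one_mul]
      _ ≤ |v i₀ (a i₀) - v i₀ (b i₀)| := hcmp _ _
      _ = |G a - G b| := h2.symm
  -- now sum up
  have hsum : ∀ w : ∀ _ : Fin n, α → ℝ,
      (∑ σ : Fin n → Bool, sSup (radSet T w (flip σ)))
        = ∑ σ : Fin n → Bool, sSup (radSet T w σ) :=
    fun w => Fintype.sum_bijective flip hinv.bijective _ _ (fun σ => rfl)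
  have h2 : (∑ σ : Fin n → Bool, (sSup (radSet T u σ) + sSup (radSet T u (flip σ))))
      ≤ ∑ σ : Fin n → Bool, (sSup (radSet T v σ) + sSup (radSet T v (flip σ))) :=
    Finset.sum_le_sum fun σ _ => pair σ
  rw [Finset.sum_add_distrib, Finset.sum_add_distrib, hsum u, hsum v] at h2
  unfold rad
  linarith

lemma rad_comp_le {T : Set (Fin n → α)} (hT : T.Nonempty) {f g : ∀ _ : Fin n, α → ℝ} {Cf Cg : ℝ}
    (hbf : ∀ t ∈ T, ∀ i, |f i (t i)| ≤ Cf) (hbg : ∀ t ∈ T, ∀ i, |g i (t i)| ≤ Cg)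
    (hfg : ∀ (i : Fin n) (a b : α), |f i a - f i b| ≤ |g i a - g i b|) :
    rad T f ≤ rad T g := by
  classical
  set C : ℝ := max Cf Cg with hC
  have hbf' : ∀ t ∈ T, ∀ i, |f i (t i)| ≤ C := fun t ht i => (hbf t ht i).trans (le_max_left _ _)
  have hbg' : ∀ t ∈ T, ∀ i, |g i (t i)| ≤ C := fun t ht i => (hbg t ht i).trans (le_max_right _ _)
  set m : Finset (Fin n) → (∀ _ : Fin n, α → ℝ) := fun S i => if i ∈ S then f i else g i with hm
  have hbm : ∀ S : Finset (Fin n), ∀ t ∈ T, ∀ i, |m S i (t i)| ≤ C := by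
    intro S t ht i
    rw [hm]
    dsimp only
    split
    · exact hbf' t ht i
    · exact hbg' t ht i
  have key : ∀ S : Finset (Fin n), rad T (m S) ≤ rad T g := by
    intro S
    induction S using Finset.induction_on with
    | empty =>
        have : m ∅ = g := by funext i a; simp [hm]
        rw [this]
    | @insert a S' ha ih =>
        refine le_trans (rad_step hT (m (insert a S')) (m S') (C := C)
          (hbm _) (hbm _) a ?_ ?_) ih
        · intro i hi
          rw [hm]
          simp only [Finset.mem_insert]
          by_cases h : i ∈ S' <;> simp [h, hi]
        · intro p q
          rw [hm]
          simp [ha, Finset.mem_insert]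
          exact hfg a p q
  have : m univ = f := by funext i a; simp [hm]
  calc rad T f = rad T (m univ) := by rw [this]
    _ ≤ rad T g := key univ

lemma rad_min_le {T : Set (Fin n → α)} (hT : T.Nonempty) {p q : ∀ _ : Fin n, α → ℝ} {C : ℝ}
    (hbp : ∀ t ∈ T, ∀ i, |p i (t i)| ≤ C) (hbq : ∀ t ∈ T, ∀ i, |q i (t i)| ≤ C) :
    rad T (fun i a => min (p i a) (q i a)) ≤ rad T p + rad T q := by
  have hmin : ∀ a b : ℝ, min a b = 2⁻¹ * (a + b) + -(2⁻¹ * |a - b|) := by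
    intro a b
    rcases le_total a b with h | h
    · rw [min_eq_left h, abs_of_nonpos (by linarith)]; ring
    · rw [min_eq_right h, abs_of_nonneg (by linarith)]; ring
  have hrw : (fun i (a : α) => min (p i a) (q i a))
      = fun i a => 2⁻¹ * (p i a + q i a) + -(2⁻¹ * |p i a - q i a|) := by
    funext i a; exact hmin _ _
  rw [hrw]
  -- bounds
  have hb1 : ∀ t ∈ T, ∀ i, |2⁻¹ * (p i (t i) + q i (t i))| ≤ 2 * C := by
    intro t ht i
    rw [abs_mul]
    calc |(2:ℝ)⁻¹| * |p i (t i) + q i (t i)| ≤ 1 * (|p i (t i)| + |q i (t i)|) := by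
          refine mul_le_mul (by rw [abs_of_nonneg] <;> norm_num) (abs_add_le _ _)
            (abs_nonneg _) zero_le_one
      _ ≤ 2 * C := by
          have := hbp t ht i; have := hbq t ht i; linarith
  have hb2 : ∀ t ∈ T, ∀ i, |-(2⁻¹ * |p i (t i) - q i (t i)|)| ≤ 2 * C := by
    intro t ht i
    rw [abs_neg, abs_mul, abs_abs]
    calc |(2:ℝ)⁻¹| * |p i (t i) - q i (t i)| ≤ 1 * (|p i (t i)| + |q i (t i)|) := by
          refine mul_le_mul (by rw [abs_of_nonneg] <;> norm_num) (abs_sub _ _)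
            (abs_nonneg _) zero_le_one
      _ ≤ 2 * C := by
          have := hbp t ht i; have := hbq t ht i; linarith
  have hbpq : ∀ t ∈ T, ∀ i, |p i (t i) + q i (t i)| ≤ 2 * C := by
    intro t ht i
    have := hbp t ht i; have := hbq t ht i
    calc |p i (t i) + q i (t i)| ≤ |p i (t i)| + |q i (t i)| := abs_add_le _ _
      _ ≤ 2 * C := by linarith
  have hbpq' : ∀ t ∈ T, ∀ i, |p i (t i) - q i (t i)| ≤ 2 * C := by
    intro t ht i
    have := hbp t ht i; have := hbq t ht i
    calc |p i (t i) - q i (t i)| ≤ |p i (t i)| + |q i (t i)| := abs_sub _ _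
      _ ≤ 2 * C := by linarith
  have hbhalfdiff : ∀ t ∈ T, ∀ i, |2⁻¹ * (p i (t i) - q i (t i))| ≤ 2 * C := by
    intro t ht i
    rw [abs_mul, abs_of_nonneg (by norm_num : (0:ℝ) ≤ 2⁻¹)]
    have h1 := hbpq' t ht i
    have h0 : (0:ℝ) ≤ |p i (t i) - q i (t i)| := abs_nonneg _
    linarith
  have hbnq : ∀ t ∈ T, ∀ i, |-(q i (t i))| ≤ C := by
    intro t ht i; rw [abs_neg]; exact hbq t ht i
  -- step 1: split the sum
  have step1 : rad T (fun i a => 2⁻¹ * (p i a + q i a) + -(2⁻¹ * |p i a - q i a|))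
      ≤ rad T (fun i a => 2⁻¹ * (p i a + q i a)) + rad T (fun i a => -(2⁻¹ * |p i a - q i a|)) :=
    rad_add_le hT hb1 hb2
  -- step 2: first piece
  have step2 : rad T (fun i a => 2⁻¹ * (p i a + q i a)) ≤ 2⁻¹ * rad T (fun i a => p i a + q i a) :=
    rad_smul_le hT (by norm_num) hbpq
  have step3 : rad T (fun i a => p i a + q i a) ≤ rad T p + rad T q := rad_add_le hT hbp hbq
  -- step 4: contraction on the abs piece
  have step4 : rad T (fun i a => -(2⁻¹ * |p i a - q i a|))
      ≤ rad T (fun i a => 2⁻¹ * (p i a - q i a)) := by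
    refine rad_comp_le hT hb2 hbhalfdiff ?_
    intro i a b
    rw [show -(2⁻¹ * |p i a - q i a|) - -(2⁻¹ * |p i b - q i b|)
      = 2⁻¹ * (|p i b - q i b| - |p i a - q i a|) by ring]
    rw [show 2⁻¹ * (p i a - q i a) - 2⁻¹ * (p i b - q i b)
      = 2⁻¹ * ((p i a - q i a) - (p i b - q i b)) by ring]
    rw [abs_mul, abs_mul]
    refine mul_le_mul_of_nonneg_left ?_ (abs_nonneg _)
    exact le_trans (abs_abs_sub_abs_le_abs_sub _ _) (le_of_eq (abs_sub_comm _ _))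
  have step5 : rad T (fun i a => 2⁻¹ * (p i a - q i a)) ≤ 2⁻¹ * rad T (fun i a => p i a - q i a) :=
    rad_smul_le hT (by norm_num) hbpq'
  have step6 : rad T (fun i a => p i a - q i a) ≤ rad T p + rad T q := by
    have h := rad_add_le hT (g := fun i a => -(q i a)) hbp hbnq
    rw [rad_neg T q] at h
    calc rad T (fun i a => p i a - q i a) = rad T (fun i a => p i a + -(q i a)) := by
          refine congrArg _ ?_; funext i a; ring
      _ ≤ rad T p + rad T q := h
  linarith

section Concrete

variable {X : Type*} {n : ℕ} (x : Fin n → X) (y : Fin n → ℝ) (H : Set (X → ℝ))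
  (ℓ : ℝ → ℝ → ℝ)

def Vcl : Set (Fin n → ℝ) := (fun (h : X → ℝ) (i : Fin n) => h (x i)) '' H

def Tcl (m : ℕ) : Set (Fin n → (Fin m → ℝ)) :=
  (fun (h : Fin m → X → ℝ) (i : Fin n) (j : Fin m) => h j (x i)) '' {h | ∀ j, h j ∈ H}

def fL : ∀ _ : Fin n, ℝ → ℝ := fun i a => ℓ (y i) a

def fId : ∀ _ : Fin n, ℝ → ℝ := fun _ a => a

def fMin (m : ℕ) : ∀ _ : Fin n, (Fin (m + 1) → ℝ) → ℝ := fun i v =>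
  (univ : Finset (Fin (m + 1))).inf' Finset.univ_nonempty (fun j => ℓ (y i) (v j))

lemma rad_congr_sets {α β : Type*} {T : Set (Fin n → α)} {T' : Set (Fin n → β)}
    {f : ∀ _ : Fin n, α → ℝ} {f' : ∀ _ : Fin n, β → ℝ}
    (h : ∀ σ : Fin n → Bool, radSet T f σ = radSet T' f' σ) : rad T f = rad T' f' :=
  Finset.sum_congr rfl fun σ _ => by rw [h σ]

lemma mem_radSet_Tcl {m : ℕ} {f : ∀ _ : Fin n, (Fin m → ℝ) → ℝ} {σ : Fin n → Bool} {s : ℝ} :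
    s ∈ radSet (Tcl x H m) f σ ↔
      ∃ h : Fin m → X → ℝ, (∀ j, h j ∈ H) ∧
        (∑ i, sg σ i * f i (fun j => h j (x i))) = s := by
  constructor
  · rintro ⟨t, ⟨h, hh, rfl⟩, rfl⟩
    exact ⟨h, hh, rfl⟩
  · rintro ⟨h, hh, rfl⟩
    exact ⟨_, ⟨h, hh, rfl⟩, rfl⟩

lemma mem_radSet_Vcl {f : ∀ _ : Fin n, ℝ → ℝ} {σ : Fin n → Bool} {s : ℝ} :
    s ∈ radSet (Vcl x H) f σ ↔
      ∃ h ∈ H, (∑ i, sg σ i * f i (h (x i))) = s := by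
  constructor
  · rintro ⟨t, ⟨h, hh, rfl⟩, rfl⟩
    exact ⟨h, hh, rfl⟩
  · rintro ⟨h, hh, rfl⟩
    exact ⟨_, ⟨h, hh, rfl⟩, rfl⟩

lemma inf'_fin_one (g : Fin 1 → ℝ) (hne : (univ : Finset (Fin 1)).Nonempty) :
    (univ : Finset (Fin 1)).inf' hne g = g 0 := by
  apply le_antisymm
  · exact inf'_le _ (mem_univ _)
  · exact Finset.le_inf' _ _ fun j _ => le_of_eq (by rw [Subsingleton.elim (0 : Fin 1) j])

lemma inf'_fin_succ {m : ℕ} (g : Fin (m + 2) → ℝ) (h1 h2) :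
    (univ : Finset (Fin (m + 2))).inf' h1 g
      = min ((univ : Finset (Fin (m + 1))).inf' h2 (fun j => g j.castSucc))
          (g (Fin.last (m + 1))) := by
  apply le_antisymm
  · exact le_min (Finset.le_inf' _ _ fun j _ => inf'_le _ (mem_univ _))
      (inf'_le _ (mem_univ _))
  · refine Finset.le_inf' _ _ fun j _ => ?_
    induction j using Fin.lastCases with
    | last => exact min_le_right _ _
    | cast j' => exact le_trans (min_le_left _ _) (inf'_le _ (mem_univ _))

variable {B μ : ℝ}

lemma Vcl_nonempty (hH : H.Nonempty) : (Vcl x H).Nonempty := hH.image _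

lemma Tcl_nonempty (hH : H.Nonempty) (m : ℕ) : (Tcl x H m).Nonempty := by
  obtain ⟨h0, hh0⟩ := hH
  exact ⟨_, ⟨fun _ => h0, fun _ => hh0, rfl⟩⟩

lemma fMin_bound (hb2 : ∀ h ∈ H, ∀ i : Fin n, |ℓ (y i) (h (x i))| ≤ B) (m : ℕ) :
    ∀ t ∈ Tcl x H (m + 1), ∀ i, |fMin y ℓ m i (t i)| ≤ B := by
  rintro t ⟨h, hh, rfl⟩ i
  rw [abs_le]
  constructor
  · refine Finset.le_inf' _ _ fun j _ => ?_
    exact (abs_le.1 (hb2 (h j) (hh j) i)).1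
  · exact le_trans (inf'_le _ (mem_univ 0)) (abs_le.1 (hb2 (h 0) (hh 0) i)).2

lemma mainInduction (hH : H.Nonempty)
    (hb2 : ∀ h ∈ H, ∀ i : Fin n, |ℓ (y i) (h (x i))| ≤ B) :
    ∀ m : ℕ, rad (Tcl x H (m + 1)) (fMin y ℓ m) ≤ (m + 1 : ℝ) * rad (Vcl x H) (fL y ℓ) := by
  have hbV : ∀ v ∈ Vcl x H, ∀ i, |fL y ℓ i (v i)| ≤ B := by
    rintro v ⟨h, hh, rfl⟩ i
    exact hb2 h hh i
  intro m
  induction m with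
  | zero =>
      have heq : rad (Tcl x H 1) (fMin y ℓ 0) = rad (Vcl x H) (fL y ℓ) := by
        refine rad_congr_sets fun σ => ?_
        ext s
        rw [mem_radSet_Tcl, mem_radSet_Vcl]
        constructor
        · rintro ⟨h, hh, rfl⟩
          refine ⟨h 0, hh 0, Finset.sum_congr rfl fun i _ => ?_⟩
          rw [fMin, inf'_fin_one]; rfl
        · rintro ⟨h, hh, rfl⟩
          refine ⟨fun _ => h, fun _ => hh, Finset.sum_congr rfl fun i _ => ?_⟩
          rw [fMin, inf'_fin_one]; rfl
      rw [heq]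
      norm_num
  | succ m ih =>
      set p : ∀ _ : Fin n, (Fin (m + 2) → ℝ) → ℝ := fun i v =>
        (univ : Finset (Fin (m + 1))).inf' ⟨0, mem_univ _⟩
          (fun j => ℓ (y i) (v j.castSucc)) with hp
      set q : ∀ _ : Fin n, (Fin (m + 2) → ℝ) → ℝ := fun i v =>
        ℓ (y i) (v (Fin.last (m + 1))) with hq
      have hsplit : fMin y ℓ (m + 1) = fun i v => min (p i v) (q i v) := by
        funext i v
        rw [fMin, inf'_fin_succ _ _ ⟨0, mem_univ _⟩, hp, hq]
      have hbp : ∀ t ∈ Tcl x H (m + 2), ∀ i, |p i (t i)| ≤ B := by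
        rintro t ⟨h, hh, rfl⟩ i
        rw [hp, abs_le]
        constructor
        · refine Finset.le_inf' _ _ fun j _ => ?_
          exact (abs_le.1 (hb2 _ (hh j.castSucc) i)).1
        · exact le_trans (inf'_le _ (mem_univ 0))
            (abs_le.1 (hb2 _ (hh (0 : Fin (m+1)).castSucc) i)).2
      have hbq : ∀ t ∈ Tcl x H (m + 2), ∀ i, |q i (t i)| ≤ B := by
        rintro t ⟨h, hh, rfl⟩ i
        exact hb2 _ (hh _) i
      have hmin := rad_min_le (Tcl_nonempty x H hH (m + 2)) hbp hbq
      have hP : rad (Tcl x H (m + 2)) p = rad (Tcl x H (m + 1)) (fMin y ℓ m) := by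
        refine rad_congr_sets fun σ => ?_
        ext s
        rw [mem_radSet_Tcl, mem_radSet_Tcl]
        constructor
        · rintro ⟨h, hh, rfl⟩
          exact ⟨fun j => h j.castSucc, fun j => hh _, rfl⟩
        · rintro ⟨h, hh, rfl⟩
          obtain ⟨h0, hh0⟩ := hH
          refine ⟨Fin.snoc h h0, fun j => ?_, Finset.sum_congr rfl fun i _ => ?_⟩
          · induction j using Fin.lastCases with
            | last => rw [Fin.snoc_last]; exact hh0
            | cast j' => rw [Fin.snoc_castSucc]; exact hh j'
          · congr 1
            rw [hp]
            dsimp only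
            refine congrArg _ ?_
            funext j
            rw [Fin.snoc_castSucc]
      have hQ : rad (Tcl x H (m + 2)) q = rad (Vcl x H) (fL y ℓ) := by
        refine rad_congr_sets fun σ => ?_
        ext s
        rw [mem_radSet_Tcl, mem_radSet_Vcl]
        constructor
        · rintro ⟨h, hh, rfl⟩
          exact ⟨h (Fin.last (m + 1)), hh _, rfl⟩
        · rintro ⟨h, hh, rfl⟩
          exact ⟨fun _ => h, fun _ => hh, rfl⟩
      rw [hsplit]
      calc rad (Tcl x H (m + 2)) (fun i v => min (p i v) (q i v))
          ≤ rad (Tcl x H (m + 2)) p + rad (Tcl x H (m + 2)) q := hmin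
        _ ≤ (m + 1 : ℝ) * rad (Vcl x H) (fL y ℓ) + rad (Vcl x H) (fL y ℓ) := by
            rw [hP, hQ]; exact add_le_add_left ih _
        _ = ((m + 1 : ℕ) + 1 : ℝ) * rad (Vcl x H) (fL y ℓ) := by push_cast; ring

lemma contraction_base (hH : H.Nonempty) (hμ : 0 ≤ μ)
    (hℓ : ∀ y' a b : ℝ, |ℓ y' a - ℓ y' b| ≤ μ * |a - b|)
    (hb1 : ∀ h ∈ H, ∀ i : Fin n, |h (x i)| ≤ B)
    (hb2 : ∀ h ∈ H, ∀ i : Fin n, |ℓ (y i) (h (x i))| ≤ B) :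
    rad (Vcl x H) (fL y ℓ) ≤ μ * rad (Vcl x H) (fId (n := n)) := by
  have hbV : ∀ v ∈ Vcl x H, ∀ i, |fL y ℓ i (v i)| ≤ B := by
    rintro v ⟨h, hh, rfl⟩ i
    exact hb2 h hh i
  have hbId : ∀ v ∈ Vcl x H, ∀ i, |fId (n := n) i (v i)| ≤ B := by
    rintro v ⟨h, hh, rfl⟩ i
    exact hb1 h hh i
  have hbMu : ∀ v ∈ Vcl x H, ∀ i, |μ * fId (n := n) i (v i)| ≤ μ * B := by
    rintro v ⟨h, hh, rfl⟩ i
    rw [abs_mul, abs_of_nonneg hμ]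
    exact mul_le_mul_of_nonneg_left (hb1 h hh i) hμ
  have step1 : rad (Vcl x H) (fL y ℓ) ≤ rad (Vcl x H) (fun i a => μ * fId (n := n) i a) := by
    refine rad_comp_le (Vcl_nonempty x H hH) hbV hbMu ?_
    intro i a b
    calc |fL y ℓ i a - fL y ℓ i b| ≤ μ * |a - b| := hℓ (y i) a b
      _ = |μ * a - μ * b| := by
          rw [show μ * a - μ * b = μ * (a - b) by ring, abs_mul, abs_of_nonneg hμ]
      _ = |μ * fId (n := n) i a - μ * fId (n := n) i b| := rfl
  have step2 : rad (Vcl x H) (fun i a => μ * fId (n := n) i a)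
      ≤ μ * rad (Vcl x H) (fId (n := n)) :=
    rad_smul_le (Vcl_nonempty x H hH) hμ hbId
  exact le_trans step1 step2

end Concrete

end RadAux

/-- The unnormalized empirical Rademacher complexity of the `k`-list min-loss class is at
most `k * μ` times that of the base class `H`. -/
theorem stmt_0 {X : Type*} (n k : ℕ) (hn : 1 ≤ n) (hk : 1 ≤ k)
    (x : Fin n → X) (y : Fin n → ℝ)
    (H : Set (X → ℝ)) (hH : H.Nonempty)
    (μ : ℝ) (hμ : 0 ≤ μ)
    (ℓ : ℝ → ℝ → ℝ) (hℓ : ∀ y a b : ℝ, |ℓ y a - ℓ y b| ≤ μ * |a - b|)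
    (B : ℝ) (hB : 0 ≤ B)
    (hb1 : ∀ h ∈ H, ∀ i : Fin n, |h (x i)| ≤ B)
    (hb2 : ∀ h ∈ H, ∀ i : Fin n, |ℓ (y i) (h (x i))| ≤ B) :
    (1 / 2 : ℝ) ^ n *
        ∑ σ : Fin n → Bool,
          sSup {s : ℝ | ∃ h : Fin k → X → ℝ, (∀ j, h j ∈ H) ∧
            s = ∑ i, (if σ i then (1 : ℝ) else -1) *
              Finset.univ.inf' ⟨⟨0, hk⟩, Finset.mem_univ _⟩
                (fun j => ℓ (y i) (h j (x i)))} ≤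
      (k : ℝ) * μ *
        ((1 / 2 : ℝ) ^ n *
          ∑ σ : Fin n → Bool,
            sSup {s : ℝ | ∃ h ∈ H,
              s = ∑ i, (if σ i then (1 : ℝ) else -1) * h (x i)}) := by
  classical
  obtain ⟨m, rfl⟩ : ∃ m, k = m + 1 := ⟨k - 1, by omega⟩
  have hL : ∀ σ : Fin n → Bool,
      {s : ℝ | ∃ h : Fin (m + 1) → X → ℝ, (∀ j, h j ∈ H) ∧
        s = ∑ i, (if σ i then (1 : ℝ) else -1) *
          Finset.univ.inf' ⟨⟨0, hk⟩, Finset.mem_univ _⟩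
            (fun j => ℓ (y i) (h j (x i)))}
      = RadAux.radSet (RadAux.Tcl x H (m + 1)) (RadAux.fMin y ℓ m) σ := by
    intro σ
    ext s
    rw [RadAux.mem_radSet_Tcl]
    constructor
    · rintro ⟨h, hh, rfl⟩
      exact ⟨h, hh, rfl⟩
    · rintro ⟨h, hh, rfl⟩
      exact ⟨h, hh, rfl⟩
  have hR : ∀ σ : Fin n → Bool,
      {s : ℝ | ∃ h ∈ H, s = ∑ i, (if σ i then (1 : ℝ) else -1) * h (x i)}
      = RadAux.radSet (RadAux.Vcl x H) (RadAux.fId (n := n)) σ := by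
    intro σ
    ext s
    rw [RadAux.mem_radSet_Vcl]
    constructor
    · rintro ⟨h, hh, rfl⟩
      exact ⟨h, hh, rfl⟩
    · rintro ⟨h, hh, rfl⟩
      exact ⟨h, hh, rfl⟩
  have hmain : RadAux.rad (RadAux.Tcl x H (m + 1)) (RadAux.fMin y ℓ m)
      ≤ ((m + 1 : ℕ) : ℝ) * μ * RadAux.rad (RadAux.Vcl x H) (RadAux.fId (n := n)) := by
    calc RadAux.rad (RadAux.Tcl x H (m + 1)) (RadAux.fMin y ℓ m)
        ≤ ((m : ℝ) + 1) * RadAux.rad (RadAux.Vcl x H) (RadAux.fL y ℓ) :=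
          RadAux.mainInduction x y H ℓ hH hb2 m
      _ ≤ ((m : ℝ) + 1) * (μ * RadAux.rad (RadAux.Vcl x H) (RadAux.fId (n := n))) := by
          refine mul_le_mul_of_nonneg_left ?_ (by positivity)
          exact RadAux.contraction_base x y H ℓ hH hμ hℓ hb1 hb2
      _ = ((m + 1 : ℕ) : ℝ) * μ * RadAux.rad (RadAux.Vcl x H) (RadAux.fId (n := n)) := by
          push_cast; ring
  have hLsum : (∑ σ : Fin n → Bool,
      sSup {s : ℝ | ∃ h : Fin (m + 1) → X → ℝ, (∀ j, h j ∈ H) ∧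
        s = ∑ i, (if σ i then (1 : ℝ) else -1) *
          Finset.univ.inf' ⟨⟨0, hk⟩, Finset.mem_univ _⟩
            (fun j => ℓ (y i) (h j (x i)))})
      = RadAux.rad (RadAux.Tcl x H (m + 1)) (RadAux.fMin y ℓ m) :=
    Finset.sum_congr rfl fun σ _ => by rw [hL σ]
  have hRsum : (∑ σ : Fin n → Bool,
      sSup {s : ℝ | ∃ h ∈ H, s = ∑ i, (if σ i then (1 : ℝ) else -1) * h (x i)})
      = RadAux.rad (RadAux.Vcl x H) (RadAux.fId (n := n)) :=
    Finset.sum_congr rfl fun σ _ => by rw [hR σ]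
  rw [hLsum, hRsum]
  have hpow : (0 : ℝ) ≤ (1 / 2 : ℝ) ^ n := by positivity
  calc (1 / 2 : ℝ) ^ n * RadAux.rad (RadAux.Tcl x H (m + 1)) (RadAux.fMin y ℓ m)
      ≤ (1 / 2 : ℝ) ^ n * (((m + 1 : ℕ) : ℝ) * μ
          * RadAux.rad (RadAux.Vcl x H) (RadAux.fId (n := n))) :=
        mul_le_mul_of_nonneg_left hmain hpow
    _ = ((m + 1 : ℕ) : ℝ) * μ *
        ((1 / 2 : ℝ) ^ n * RadAux.rad (RadAux.Vcl x H) (RadAux.fId (n := n))) := by ring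
end

section
/- Let T be a nonempty set, k ≥ 1, μ ≥ 0, and let ℓ : ℝ → ℝ → ℝ be μ-Lipschitz in its second argument. Let u : T → ℝ, v : T → (Fin k → ℝ), and y ∈ ℝ, and assume u and all coordinates of v are bounded on T (so that all suprema below are suprema of nonempty bounded-above sets of reals). Then sup_{t ∈ T} (u(t) + min_{j ∈ {1,…,k}} ℓ(y, v(t)_j)) + sup_{t ∈ T} (u(t) − min_{j ∈ {1,…,k}} ℓ(y, v(t)_j)) ≤ Σ_{l=1}^{k} [ sup_{t ∈ T} (u(t)/k + μ · v(t)_l) + sup_{t ∈ T} (u(t)/k − μ · v(t)_l) ]. -/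
/-- One-step symmetrization/contraction inequality for the `k`-list min-loss. -/
theorem stmt_3 {T : Type*} [Nonempty T] (k : ℕ) (hk : 1 ≤ k)
    (μ : ℝ) (hμ : 0 ≤ μ)
    (ℓ : ℝ → ℝ → ℝ) (hℓ : ∀ y a b : ℝ, |ℓ y a - ℓ y b| ≤ μ * |a - b|)
    (u : T → ℝ) (v : T → Fin k → ℝ) (y : ℝ)
    (Cu : ℝ) (hu : ∀ t, |u t| ≤ Cu)
    (Cv : ℝ) (hv : ∀ t j, |v t j| ≤ Cv) :
    (⨆ t : T, (u t +
        Finset.univ.inf' ⟨⟨0, hk⟩, Finset.mem_univ _⟩ (fun j => ℓ y (v t j)))) +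
      (⨆ t : T, (u t -
        Finset.univ.inf' ⟨⟨0, hk⟩, Finset.mem_univ _⟩ (fun j => ℓ y (v t j)))) ≤
      ∑ l : Fin k,
        ((⨆ t : T, (u t / k + μ * v t l)) + (⨆ t : T, (u t / k - μ * v t l))) := by
  have hkpos : (0 : ℝ) < k := by exact_mod_cast Nat.lt_of_lt_of_le Nat.zero_lt_one hk
  set m : T → ℝ := fun t =>
    Finset.univ.inf' ⟨⟨0, hk⟩, Finset.mem_univ _⟩ (fun j => ℓ y (v t j)) with hm
  have bddp : ∀ l : Fin k, BddAbove (Set.range fun t => u t / k + μ * v t l) := by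
    intro l
    refine ⟨Cu / k + μ * Cv, ?_⟩
    rintro x ⟨t, rfl⟩
    have h1 : u t ≤ Cu := le_of_abs_le (hu t)
    have h2 : v t l ≤ Cv := le_of_abs_le (hv t l)
    have h3 : u t / k ≤ Cu / k := by gcongr
    have h4 : μ * v t l ≤ μ * Cv := by gcongr
    linarith
  have bddm : ∀ l : Fin k, BddAbove (Set.range fun t => u t / k - μ * v t l) := by
    intro l
    refine ⟨Cu / k + μ * Cv, ?_⟩
    rintro x ⟨t, rfl⟩
    have h1 : u t ≤ Cu := le_of_abs_le (hu t)
    have h2 : -Cv ≤ v t l := neg_le_of_abs_le (hv t l)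
    have h3 : u t / k ≤ Cu / k := by gcongr
    have h4 : μ * (-Cv) ≤ μ * v t l := by gcongr
    nlinarith
  set C : ℝ := ∑ l : Fin k,
      ((⨆ t : T, (u t / k + μ * v t l)) + (⨆ t : T, (u t / k - μ * v t l))) with hC
  have key : ∀ t s : T, (u t + m t) + (u s - m s) ≤ C := by
    intro t s
    obtain ⟨j, -, hj⟩ := Finset.exists_mem_eq_inf'
      (⟨⟨0, hk⟩, Finset.mem_univ _⟩ : (Finset.univ : Finset (Fin k)).Nonempty)
      (fun j => ℓ y (v s j))
    have hmt : m t ≤ ℓ y (v t j) := Finset.inf'_le _ (Finset.mem_univ j)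
    have hlip : ℓ y (v t j) - ℓ y (v s j) ≤ μ * |v t j - v s j| :=
      (le_abs_self _).trans (hℓ y _ _)
    have hms : m s = ℓ y (v s j) := hj
    have hl : ∀ l : Fin k,
        (if l = j then u t / k + u s / k + μ * |v t j - v s j|
          else u t / k + u s / k) ≤
        (⨆ r : T, (u r / k + μ * v r l)) + (⨆ r : T, (u r / k - μ * v r l)) := by
      intro l
      have hA : ∀ r : T, u r / k + μ * v r l ≤ ⨆ r : T, (u r / k + μ * v r l) :=
        fun r => le_ciSup (bddp l) r
      have hB : ∀ r : T, u r / k - μ * v r l ≤ ⨆ r : T, (u r / k - μ * v r l) :=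
        fun r => le_ciSup (bddm l) r
      by_cases hlj : l = j
      · subst hlj
        rw [if_pos rfl]
        rcases le_total (v s l) (v t l) with h | h
        · rw [abs_of_nonneg (by linarith)]
          linarith [hA t, hB s]
        · rw [abs_of_nonpos (by linarith)]
          linarith [hA s, hB t]
      · simp only [if_neg hlj]
        linarith [hA t, hB s, hA s, hB t]
    have hsum : ∑ l : Fin k,
        (if l = j then u t / k + u s / k + μ * |v t j - v s j|
          else u t / k + u s / k) = u t + u s + μ * |v t j - v s j| := by
      have he : ∀ l : Fin k,
          (if l = j then u t / k + u s / k + μ * |v t j - v s j|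
            else u t / k + u s / k)
          = (u t / k + u s / k) + (if l = j then μ * |v t j - v s j| else 0) := by
        intro l; split_ifs <;> ring
      rw [Finset.sum_congr rfl (fun l _ => he l), Finset.sum_add_distrib,
        Finset.sum_const, Finset.sum_ite_eq' Finset.univ j, if_pos (Finset.mem_univ j),
        Finset.card_univ, Fintype.card_fin, nsmul_eq_mul]
      have : (k : ℝ) ≠ 0 := ne_of_gt hkpos
      field_simp
    have : (u t + m t) + (u s - m s) ≤ u t + u s + μ * |v t j - v s j| := by
      linarith
    calc (u t + m t) + (u s - m s)
        ≤ u t + u s + μ * |v t j - v s j| := this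
      _ = ∑ l : Fin k,
          (if l = j then u t / k + u s / k + μ * |v t j - v s j|
            else u t / k + u s / k) := hsum.symm
      _ ≤ C := Finset.sum_le_sum (fun l _ => hl l)
  have h1 : (⨆ t : T, (u t + m t)) ≤ C - ⨆ s : T, (u s - m s) := by
    refine ciSup_le fun t => ?_
    have h2 : (⨆ s : T, (u s - m s)) ≤ C - (u t + m t) :=
      ciSup_le fun s => by linarith [key t s]
    linarith
  linarith
end

section
/- Let E be a real inner product space, n ≥ 1, let x : Fin n → E and y : Fin n → ℝ satisfy ‖x_i‖ ≤ 1 and |y_i| ≤ 1 for all i. Let S₁, S₁* ⊆ Fin n be finite subsets, θ, θ* ∈ E, and γ ≥ 0, ρ ≥ 0, μ ≥ 0 satisfy: (i) 2γ·|S₁| ≤ n; (ii) Σ_{i ∈ S₁} ⟨x_i, v⟩² ≥ ρ · n · ‖v‖² for all v ∈ E; (iii) ‖2(y_i − ⟨x_i, θ*⟩) x_i‖ ≤ μ for every i ∈ S₁*. Define θ⁺ = θ + (2γ/n) Σ_{i ∈ S₁} (y_i − ⟨x_i, θ⟩) x_i. Then ‖θ⁺ − θ*‖ ≤ (1 − 2γρ)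 · ‖θ − θ*‖ + (γ/n) · ( |S₁ ∩ S₁*| · μ + 2 · |S₁ \ S₁*| · (‖θ*‖ + 1) ). -/
/-!
With `Δ = θ - θ*`, `η = 2γ/n` and `M = ∑_{i ∈ S₁} xᵢ xᵢᵀ`, the step splits as
`θ⁺ - θ* = (1 - η M) Δ + η ∑_{i ∈ S₁} (yᵢ - ⟪xᵢ, θ*⟫) xᵢ`.
Since `‖xᵢ‖ ≤ 1` and `η |S₁| ≤ 1`, the operator `1 - η M` is positive, and by the eigenvalue
bound its quadratic form is at most `(1 - 2γρ) ‖·‖²`; for a positive operator this bounds its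
norm. The residual sum is bounded termwise, by the bias bound on `S₁ ∩ S₁*` and by
`2 (‖θ*‖ + 1)` (from `‖xᵢ‖, |yᵢ| ≤ 1`) on `S₁ \ S₁*`.
-/

open scoped RealInnerProductSpace

open Finset InnerProductSpace

section

variable {E : Type*} [NormedAddCommGroup E] [InnerProductSpace ℝ E]

theorem LinearMap.IsPositive.norm_apply_le {T : E →ₗ[ℝ] E} (hT : T.IsPositive) {c : ℝ}
    (hc : ∀ v, ⟪T v, v⟫ ≤ c * ‖v‖ ^ 2) (u : E) : ‖T u‖ ≤ c * ‖u‖ := by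
  -- Cauchy–Schwarz for the positive form `⟪T ·, ·⟫` at `(u, T u)`:
  -- `‖T u‖⁴ ≤ ⟪T u, u⟫ ⟪T (T u), T u⟫`.
  have hcs := LinearMap.BilinForm.apply_mul_apply_le_of_forall_zero_le
    ((innerₗ E).comp T) hT.inner_nonneg_left u (T u)
  simp only [LinearMap.comp_apply, innerₗ_apply_apply, hT.isSymmetric (T u) u,
    real_inner_self_eq_norm_sq] at hcs
  have hcu : 0 ≤ c * ‖u‖ := by
    rcases (norm_nonneg u).eq_or_lt with hu | hu
    · simp [← hu]
    · have := (hT.inner_nonneg_left u).trans (hc u)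
      nlinarith
  have hbound : ‖T u‖ ^ 2 * ‖T u‖ ^ 2 ≤ (c * ‖u‖) ^ 2 * ‖T u‖ ^ 2 := by
    calc ‖T u‖ ^ 2 * ‖T u‖ ^ 2 ≤ ⟪T u, u⟫ * ⟪T (T u), T u⟫ := hcs
      _ ≤ (c * ‖u‖ ^ 2) * (c * ‖T u‖ ^ 2) :=
        mul_le_mul (hc u) (hc (T u)) (hT.inner_nonneg_left _)
          ((hT.inner_nonneg_left u).trans (hc u))
      _ = (c * ‖u‖) ^ 2 * ‖T u‖ ^ 2 := by ring
  rcases (norm_nonneg (T u)).eq_or_lt with hTu | hTu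
  · rw [← hTu]; exact hcu
  · exact (pow_le_pow_iff_left₀ (norm_nonneg _) hcu two_ne_zero).mp
      (le_of_mul_le_mul_right hbound (by positivity))

variable {ι : Type*}

/-- `∑_{i ∈ S} xᵢ xᵢᵀ`, the paper's empirical second-moment operator without its factor `1/n`. -/
noncomputable def secondMoment (S : Finset ι) (x : ι → E) : E →ₗ[ℝ] E :=
  ∑ i ∈ S, (rankOne ℝ (x i) (x i) : E →ₗ[ℝ] E)

@[simp]
theorem secondMoment_apply (S : Finset ι) (x : ι → E) (v : E) :
    secondMoment S x v = ∑ i ∈ S, ⟪x i, v⟫ • x i := by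
  simp [secondMoment]

theorem inner_secondMoment_apply_self (S : Finset ι) (x : ι → E) (v : E) :
    ⟪secondMoment S x v, v⟫ = ∑ i ∈ S, ⟪x i, v⟫ ^ 2 := by
  simp [sum_inner, real_inner_smul_left, sq]

theorem isPositive_secondMoment (S : Finset ι) (x : ι → E) : (secondMoment S x).IsPositive :=
  LinearMap.isPositive_sum S fun i _ => (isPositive_rankOne_self (x i)).toLinearMap

theorem inner_secondMoment_apply_self_le {S : Finset ι} {x : ι → E} (hx : ∀ i ∈ S, ‖x i‖ ≤ 1)
    (v : E) : ⟪secondMoment S x v, v⟫ ≤ #S * ‖v‖ ^ 2 := by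
  rw [inner_secondMoment_apply_self, ← nsmul_eq_mul, ← sum_const]
  refine sum_le_sum fun i hi => ?_
  calc ⟪x i, v⟫ ^ 2 = |⟪x i, v⟫| ^ 2 := (sq_abs _).symm
    _ ≤ (‖x i‖ * ‖v‖) ^ 2 := by gcongr; exact abs_real_inner_le_norm _ _
    _ ≤ (1 * ‖v‖) ^ 2 := by gcongr; exact hx i hi
    _ = ‖v‖ ^ 2 := by ring

theorem norm_sub_smul_secondMoment_apply_le {S : Finset ι} {x : ι → E}
    (hx : ∀ i ∈ S, ‖x i‖ ≤ 1) {η κ : ℝ} (hη : 0 ≤ η) (hηS : η * #S ≤ 1)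
    (hlow : ∀ v, κ * ‖v‖ ^ 2 ≤ ⟪secondMoment S x v, v⟫) (v : E) :
    ‖v - η • secondMoment S x v‖ ≤ (1 - η * κ) * ‖v‖ := by
  have hinner (w : E) :
      ⟪(1 - η • secondMoment S x) w, w⟫ = ‖w‖ ^ 2 - η * ⟪secondMoment S x w, w⟫ := by
    simp only [LinearMap.sub_apply, Module.End.one_apply, LinearMap.smul_apply, inner_sub_left,
      real_inner_smul_left, real_inner_self_eq_norm_sq]
  have hpos : (1 - η • secondMoment S x).IsPositive := by
    refine (LinearMap.isPositive_iff _).mpr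
      ⟨LinearMap.isPositive_one.isSymmetric.sub
        ((isPositive_secondMoment S x).isSymmetric.smul rfl), fun w => ?_⟩
    rw [hinner]
    nlinarith [mul_le_mul_of_nonneg_left (inner_secondMoment_apply_self_le hx w) hη, sq_nonneg ‖w‖]
  refine hpos.norm_apply_le (fun w => ?_) v
  rw [hinner]
  nlinarith [mul_le_mul_of_nonneg_left (hlow w) hη]

theorem norm_two_mul_residual_smul_le {x θ : E} {y : ℝ} (hx : ‖x‖ ≤ 1) (hy : |y| ≤ 1) :
    ‖(2 * (y - ⟪x, θ⟫)) • x‖ ≤ 2 * (‖θ‖ + 1) := by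
  have hinner : |⟪x, θ⟫| ≤ ‖θ‖ :=
    (abs_real_inner_le_norm x θ).trans (mul_le_of_le_one_left (norm_nonneg θ) hx)
  rw [norm_smul, Real.norm_eq_abs, abs_mul, abs_two]
  calc 2 * |y - ⟪x, θ⟫| * ‖x‖ ≤ 2 * (|y| + |⟪x, θ⟫|) * 1 := by
        gcongr
        exact abs_sub _ _
    _ ≤ 2 * (‖θ‖ + 1) := by linarith

theorem add_smul_sum_residual_smul_sub_eq (S : Finset ι) (x : ι → E) (y : ι → ℝ) (η : ℝ)
    (θ θs : E) :
    (θ + η • ∑ i ∈ S, (y i - ⟪x i, θ⟫) • x i) - θs =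
      (θ - θs - η • secondMoment S x (θ - θs)) + η • ∑ i ∈ S, (y i - ⟪x i, θs⟫) • x i := by
  have hsplit : ∑ i ∈ S, (y i - ⟪x i, θ⟫) • x i =
      ∑ i ∈ S, (y i - ⟪x i, θs⟫) • x i - secondMoment S x (θ - θs) := by
    rw [secondMoment_apply, ← sum_sub_distrib]
    refine sum_congr rfl fun i _ => ?_
    rw [← sub_smul, inner_sub_right]
    ring_nf
  rw [hsplit, smul_sub]
  abel

end

theorem norm_sum_le_card_inter_mul_add_card_sdiff_mul {ι F : Type*} [DecidableEq ι]
    [SeminormedAddCommGroup F] {f : ι → F} {S T : Finset ι} {a b : ℝ}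
    (ha : ∀ i ∈ S ∩ T, ‖f i‖ ≤ a) (hb : ∀ i ∈ S \ T, ‖f i‖ ≤ b) :
    ‖∑ i ∈ S, f i‖ ≤ #(S ∩ T) * a + #(S \ T) * b := by
  rw [← sum_inter_add_sum_sdiff S T]
  refine (norm_add_le _ _).trans (add_le_add ?_ ?_)
  · simpa using norm_sum_le_of_le _ ha
  · simpa using norm_sum_le_of_le _ hb

theorem stmt_10_general {E : Type*} [NormedAddCommGroup E] [InnerProductSpace ℝ E]
    (n : ℕ) (hn : 1 ≤ n) (x : Fin n → E) (y : Fin n → ℝ)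
    (hx : ∀ i, ‖x i‖ ≤ 1) (hy : ∀ i, |y i| ≤ 1)
    (S₁ S₁s : Finset (Fin n)) (θ θs : E)
    (γ ρ μ : ℝ) (hγ : 0 ≤ γ)
    (hstep : 2 * γ * S₁.card ≤ n)
    (heig : ∀ v : E, ρ * n * ‖v‖ ^ 2 ≤ ∑ i ∈ S₁, ⟪x i, v⟫ ^ 2)
    (hbias : ∀ i ∈ S₁s, ‖(2 * (y i - ⟪x i, θs⟫)) • x i‖ ≤ μ) :
    ‖(θ + (2 * γ / n) • ∑ i ∈ S₁, (y i - ⟪x i, θ⟫) • x i) - θs‖ ≤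
      (1 - 2 * γ * ρ) * ‖θ - θs‖ +
        (γ / n) * ((S₁ ∩ S₁s).card * μ + 2 * (S₁ \ S₁s).card * (‖θs‖ + 1)) := by
  have hn0 : (0 : ℝ) < n := by exact_mod_cast hn
  have hcontraction := norm_sub_smul_secondMoment_apply_le (fun i _ => hx i) (κ := ρ * n)
    (by positivity : 0 ≤ 2 * γ / n) (by rwa [div_mul_eq_mul_div, div_le_one hn0])
    (fun v => by simpa only [inner_secondMoment_apply_self] using heig v) (θ - θs)
  have hresidual := norm_sum_le_card_inter_mul_add_card_sdiff_mul (S := S₁) (T := S₁s)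
    (fun i hi => hbias i (mem_inter.1 hi).2)
    (fun i _ => norm_two_mul_residual_smul_le (hx i) (hy i))
  have hscale : (2 * γ / n) • ∑ i ∈ S₁, (y i - ⟪x i, θs⟫) • x i =
      (γ / n) • ∑ i ∈ S₁, (2 * (y i - ⟪x i, θs⟫)) • x i := by
    simp only [smul_sum, smul_smul]
    ring_nf
  rw [add_smul_sum_residual_smul_sub_eq, hscale]
  calc _ ≤ _ := norm_add_le _ _
    _ ≤ (1 - 2 * γ / n * (ρ * n)) * ‖θ - θs‖ +
        γ / n * (#(S₁ ∩ S₁s) * μ + #(S₁ \ S₁s) * (2 * (‖θs‖ + 1))) := by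
      rw [norm_smul, Real.norm_of_nonneg (by positivity)]
      exact add_le_add hcontraction (mul_le_mul_of_nonneg_left hresidual (by positivity))
    _ = _ := by field_simp

/-- Deterministic per-iteration error bound for one gradient-AM step: contraction plus
bias/misclassification terms. -/
theorem stmt_10 {E : Type*} [NormedAddCommGroup E] [InnerProductSpace ℝ E]
    (n : ℕ) (hn : 1 ≤ n) (x : Fin n → E) (y : Fin n → ℝ)
    (hx : ∀ i, ‖x i‖ ≤ 1) (hy : ∀ i, |y i| ≤ 1)
    (S₁ S₁s : Finset (Fin n)) (θ θs : E)
    (γ ρ μ : ℝ) (hγ : 0 ≤ γ) (hρ : 0 ≤ ρ) (hμ : 0 ≤ μ)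
    (hstep : 2 * γ * S₁.card ≤ n)
    (heig : ∀ v : E, ρ * n * ‖v‖ ^ 2 ≤ ∑ i ∈ S₁, ⟪x i, v⟫ ^ 2)
    (hbias : ∀ i ∈ S₁s, ‖(2 * (y i - ⟪x i, θs⟫)) • x i‖ ≤ μ) :
    ‖(θ + (2 * γ / n) • ∑ i ∈ S₁, (y i - ⟪x i, θ⟫) • x i) - θs‖ ≤
      (1 - 2 * γ * ρ) * ‖θ - θs‖ +
        (γ / n) * ((S₁ ∩ S₁s).card * μ + 2 * (S₁ \ S₁s).card * (‖θs‖ + 1)) :=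
  stmt_10_general n hn x y hx hy S₁ S₁s θ θs γ ρ μ hγ hstep heig hbias
end

section
/- Let E be a real inner product space, let B be a finite index set, x : B → E, y : B → ℝ, and let R, b, w ≥ 0 satisfy ‖x_i‖ ≤ R and |y_i| ≤ b for all i ∈ B. Then for any θ, θ' ∈ E with ‖θ‖ ≤ w and ‖θ'‖ ≤ w, Σ_{i ∈ B} (y_i − ⟨θ', x_i⟩)² − Σ_{i ∈ B} (y_i − ⟨θ, x_i⟩)² ≤ 2(wR + b) · √( |B| · Σ_{i ∈ B} ⟨θ' − θ, x_i⟩² ). -/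
open scoped RealInnerProductSpace
open Finset

/-! Each difference of squares factors as `⟪θ' - θ, x i⟫ * (⟪θ' + θ, x i⟫ - 2 y i)`, and the second
factor is bounded by `2 (w R + b)` uniformly in `i`; Cauchy–Schwarz against that constant vector
gives the factor `√|B|`. -/

theorem Fintype.sum_mul_le_mul_sqrt_card_mul_sum_sq {ι : Type*} [Fintype ι] (c d : ι → ℝ)
    {K : ℝ} (hd : ∀ i, |d i| ≤ K) :
    ∑ i, c i * d i ≤ K * √(Fintype.card ι * ∑ i, c i ^ 2) := by
  rcases isEmpty_or_nonempty ι with hι | ⟨⟨i₀⟩⟩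
  · simp
  have hK : 0 ≤ K := (abs_nonneg _).trans (hd i₀)
  have hd_sq : ∑ i, d i ^ 2 ≤ Fintype.card ι * K ^ 2 := by
    calc ∑ i, d i ^ 2 ≤ ∑ _i : ι, K ^ 2 :=
          sum_le_sum fun i _ => sq_le_sq' (abs_le.mp (hd i)).1 (abs_le.mp (hd i)).2
      _ = Fintype.card ι * K ^ 2 := by simp
  calc ∑ i, c i * d i ≤ √(∑ i, c i ^ 2) * √(∑ i, d i ^ 2) :=
        Real.sum_mul_le_sqrt_mul_sqrt _ _ _
    _ ≤ √(∑ i, c i ^ 2) * √(Fintype.card ι * K ^ 2) := by gcongr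
    _ = K * √(Fintype.card ι * ∑ i, c i ^ 2) := by
        rw [Real.sqrt_mul (Nat.cast_nonneg _), Real.sqrt_mul (Nat.cast_nonneg _),
          Real.sqrt_sq hK]
        ring

section InnerProduct

variable {E : Type*} [NormedAddCommGroup E] [InnerProductSpace ℝ E]

theorem abs_inner_le_mul_of_norm_le {u v : E} {a c : ℝ} (hu : ‖u‖ ≤ a) (hv : ‖v‖ ≤ c) :
    |⟪u, v⟫| ≤ a * c :=
  (abs_real_inner_le_norm u v).trans
    (mul_le_mul hu hv (norm_nonneg v) ((norm_nonneg u).trans hu))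

theorem sq_sub_inner_sub_sq_sub_inner (u : E) (t : ℝ) (θ θ' : E) :
    (t - ⟪θ', u⟫) ^ 2 - (t - ⟪θ, u⟫) ^ 2 = ⟪θ' - θ, u⟫ * (⟪θ' + θ, u⟫ - 2 * t) := by
  rw [inner_sub_left, inner_add_left]
  ring

end InnerProduct

theorem stmt_11_general {E : Type*} [NormedAddCommGroup E] [InnerProductSpace ℝ E]
    {ι : Type*} [Fintype ι] (x : ι → E) (y : ι → ℝ)
    (R b w : ℝ)
    (hx : ∀ i, ‖x i‖ ≤ R) (hy : ∀ i, |y i| ≤ b)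
    (θ θ' : E) (hθ : ‖θ‖ ≤ w) (hθ' : ‖θ'‖ ≤ w) :
    ∑ i, (y i - ⟪θ', x i⟫) ^ 2 - ∑ i, (y i - ⟪θ, x i⟫) ^ 2 ≤
      2 * (w * R + b) *
        Real.sqrt ((Fintype.card ι) * ∑ i, ⟪θ' - θ, x i⟫ ^ 2) := by
  have hbound : ∀ i, |⟪θ' + θ, x i⟫ - 2 * y i| ≤ 2 * (w * R + b) := fun i => by
    have hinner : |⟪θ' + θ, x i⟫| ≤ (w + w) * R :=
      abs_inner_le_mul_of_norm_le ((norm_add_le θ' θ).trans (add_le_add hθ' hθ)) (hx i)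
    calc |⟪θ' + θ, x i⟫ - 2 * y i| ≤ |⟪θ' + θ, x i⟫| + |2 * y i| := abs_sub _ _
      _ ≤ (w + w) * R + 2 * b := by
          rw [abs_mul, abs_two]
          linarith [hy i]
      _ = 2 * (w * R + b) := by ring
  rw [← sum_sub_distrib]
  simp only [sq_sub_inner_sub_sq_sub_inner]
  exact Fintype.sum_mul_le_mul_sqrt_card_mul_sum_sq _ _ hbound

/-- Closeness of two regression parameters in the data-dependent `Σ_B`-norm controls the
difference of their least-squares errors. -/
theorem stmt_11 {E : Type*} [NormedAddCommGroup E] [InnerProductSpace ℝ E]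
    {ι : Type*} [Fintype ι] (x : ι → E) (y : ι → ℝ)
    (R b w : ℝ) (hR : 0 ≤ R) (hb : 0 ≤ b) (hw : 0 ≤ w)
    (hx : ∀ i, ‖x i‖ ≤ R) (hy : ∀ i, |y i| ≤ b)
    (θ θ' : E) (hθ : ‖θ‖ ≤ w) (hθ' : ‖θ'‖ ≤ w) :
    ∑ i, (y i - ⟪θ', x i⟫) ^ 2 - ∑ i, (y i - ⟪θ, x i⟫) ^ 2 ≤
      2 * (w * R + b) *
        Real.sqrt ((Fintype.card ι) * ∑ i, ⟪θ' - θ, x i⟫ ^ 2) :=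
  stmt_11_general x y R b w hx hy θ θ' hθ hθ'
end

section
/- Let E be a real inner product space, n ≥ 1, k ≥ 1, let x : Fin n → E and y : Fin n → ℝ, and let R, b, w ≥ 0 satisfy ‖x_i‖ ≤ R and |y_i| ≤ b for all i. Let B₁, …, B_k be pairwise disjoint finite subsets of Fin n whose union is Fin n, and let θ₁, …, θ_k and θ'₁, …, θ'_k in E satisfy ‖θ_j‖ ≤ w and ‖θ'_j‖ ≤ w for all j. Then (1/n) Σ_{i=1}^{n} min_{j ∈ {1,…,k}} (y_i − ⟨θ'_j, x_i⟩)² ≤ (1/n) Σ_{j=1}^{k} Σ_{i ∈ B_j} (y_i − ⟨θ_j, x_i⟩)² + (2(wR + b)/n) Σ_{j=1}^{k} √( |B_j| · Σ_{i ∈ B_j} ⟨θ'_j − θ_j, x_i⟩² ). -/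
/-!
On each block `B_j` the minimum over all `k` parameters is at most the loss of `θ'_j`, and
`(y - ⟪θ'_j, x⟫)² - (y - ⟪θ_j, x⟫)²` factors as a sum of two residuals, each bounded by `wR + b`,
times `⟪θ_j - θ'_j, x⟫`. Summing over the block and applying Cauchy–Schwarz to the absolute values
`|⟪θ'_j - θ_j, x_i⟫|` gives the square-root term; summing over the partition gives the theorem.
-/

open scoped RealInnerProductSpace

open Finset

lemma sum_abs_le_sqrt_card_mul_sum_sq {ι : Type*} (s : Finset ι) (f : ι → ℝ) :
    ∑ i ∈ s, |f i| ≤ √(#s * ∑ i ∈ s, f i ^ 2) := by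
  refine Real.le_sqrt_of_sq_le ?_
  simpa only [sq_abs] using sq_sum_le_card_mul_sum_sq (s := s) (f := fun i => |f i|)

lemma abs_real_inner_le_of_norm_le {E : Type*} [NormedAddCommGroup E] [InnerProductSpace ℝ E]
    {u v : E} {w R : ℝ} (hu : ‖u‖ ≤ w) (hv : ‖v‖ ≤ R) : |⟪u, v⟫| ≤ w * R :=
  (abs_real_inner_le_norm u v).trans
    (mul_le_mul hu hv (norm_nonneg v) ((norm_nonneg u).trans hu))

lemma sub_sq_sub_sub_sq_le {y a a' b c : ℝ} (hy : |y| ≤ b) (ha : |a| ≤ c) (ha' : |a'| ≤ c) :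
    (y - a') ^ 2 - (y - a) ^ 2 ≤ 2 * (c + b) * |a' - a| := by
  have hres : |(y - a') + (y - a)| ≤ 2 * (c + b) := by
    calc |(y - a') + (y - a)| ≤ |y - a'| + |y - a| := abs_add_le _ _
      _ ≤ (|y| + |a'|) + (|y| + |a|) := add_le_add (abs_sub _ _) (abs_sub _ _)
      _ ≤ 2 * (c + b) := by linarith
  calc (y - a') ^ 2 - (y - a) ^ 2 = ((y - a') + (y - a)) * (a - a') := by ring
    _ ≤ |((y - a') + (y - a)) * (a - a')| := le_abs_self _
    _ = |(y - a') + (y - a)| * |a' - a| := by rw [abs_mul, abs_sub_comm a]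
    _ ≤ 2 * (c + b) * |a' - a| := by gcongr

lemma sum_sq_residual_le_add_sqrt {E ι : Type*} [NormedAddCommGroup E] [InnerProductSpace ℝ E]
    (s : Finset ι) (x : ι → E) (y : ι → ℝ) {R b w : ℝ}
    (hx : ∀ i ∈ s, ‖x i‖ ≤ R) (hy : ∀ i ∈ s, |y i| ≤ b)
    {θ θ' : E} (hθ : ‖θ‖ ≤ w) (hθ' : ‖θ'‖ ≤ w) :
    ∑ i ∈ s, (y i - ⟪θ', x i⟫) ^ 2 ≤
      ∑ i ∈ s, (y i - ⟪θ, x i⟫) ^ 2 +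
        2 * (w * R + b) * √(#s * ∑ i ∈ s, ⟪θ' - θ, x i⟫ ^ 2) := by
  obtain rfl | ⟨i₀, hi₀⟩ := s.eq_empty_or_nonempty
  · simp
  have hcoef : 0 ≤ 2 * (w * R + b) := by
    have := (norm_nonneg _).trans (hx i₀ hi₀)
    have := (abs_nonneg _).trans (hy i₀ hi₀)
    have := (norm_nonneg _).trans hθ
    positivity
  have hpointwise : ∀ i ∈ s, (y i - ⟪θ', x i⟫) ^ 2 - (y i - ⟪θ, x i⟫) ^ 2 ≤
      2 * (w * R + b) * |⟪θ' - θ, x i⟫| := fun i hi => by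
    rw [inner_sub_left]
    exact sub_sq_sub_sub_sq_le (hy i hi) (abs_real_inner_le_of_norm_le hθ (hx i hi))
      (abs_real_inner_le_of_norm_le hθ' (hx i hi))
  have hdiff : ∑ i ∈ s, ((y i - ⟪θ', x i⟫) ^ 2 - (y i - ⟪θ, x i⟫) ^ 2) ≤
      2 * (w * R + b) * √(#s * ∑ i ∈ s, ⟪θ' - θ, x i⟫ ^ 2) :=
    calc _ ≤ ∑ i ∈ s, 2 * (w * R + b) * |⟪θ' - θ, x i⟫| := sum_le_sum hpointwise
      _ = 2 * (w * R + b) * ∑ i ∈ s, |⟪θ' - θ, x i⟫| := (mul_sum ..).symm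
      _ ≤ _ := mul_le_mul_of_nonneg_left (sum_abs_le_sqrt_card_mul_sum_sq s _) hcoef
  rw [sum_sub_distrib] at hdiff
  linarith

theorem stmt_12_general {E : Type*} [NormedAddCommGroup E] [InnerProductSpace ℝ E]
    (n k : ℕ) (hk : 1 ≤ k)
    (x : Fin n → E) (y : Fin n → ℝ)
    (R b w : ℝ)
    (hx : ∀ i, ‖x i‖ ≤ R) (hy : ∀ i, |y i| ≤ b)
    (B : Fin k → Finset (Fin n))
    (hdisj : ∀ j j' : Fin k, j ≠ j' → Disjoint (B j) (B j'))
    (hcover : ∀ i : Fin n, ∃ j : Fin k, i ∈ B j)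
    (θ θ' : Fin k → E) (hθ : ∀ j, ‖θ j‖ ≤ w) (hθ' : ∀ j, ‖θ' j‖ ≤ w) :
    (1 / n : ℝ) *
        ∑ i, Finset.univ.inf' ⟨⟨0, hk⟩, Finset.mem_univ _⟩
          (fun j => (y i - ⟪θ' j, x i⟫) ^ 2) ≤
      (1 / n : ℝ) * ∑ j, ∑ i ∈ B j, (y i - ⟪θ j, x i⟫) ^ 2 +
        (2 * (w * R + b) / n) *
          ∑ j, Real.sqrt ((B j).card * ∑ i ∈ B j, ⟪θ' j - θ j, x i⟫ ^ 2) := by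
  set minLoss : Fin n → ℝ := fun i => univ.inf' ⟨⟨0, hk⟩, mem_univ _⟩
    (fun j => (y i - ⟪θ' j, x i⟫) ^ 2)
  have hpartition : ∑ i, minLoss i = ∑ j, ∑ i ∈ B j, minLoss i := by
    have huniv : (univ : Finset (Fin n)) = univ.biUnion B := by
      ext i
      simpa using hcover i
    rw [huniv, sum_biUnion fun j _ j' _ hjj' => hdisj j j' hjj']
  have hblock : ∀ j, ∑ i ∈ B j, minLoss i ≤ ∑ i ∈ B j, (y i - ⟪θ j, x i⟫) ^ 2 +
      2 * (w * R + b) * √(#(B j) * ∑ i ∈ B j, ⟪θ' j - θ j, x i⟫ ^ 2) := fun j =>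
    (sum_le_sum fun i _ => inf'_le _ (mem_univ j)).trans
      (sum_sq_residual_le_add_sqrt (B j) x y (fun i _ => hx i) (fun i _ => hy i) (hθ j) (hθ' j))
  have hsum := (hpartition.trans_le (sum_le_sum fun j _ => hblock j)).trans_eq
    (by rw [sum_add_distrib, ← mul_sum])
  calc (1 / n : ℝ) * ∑ i, minLoss i
      ≤ (1 / n : ℝ) * (∑ j, ∑ i ∈ B j, (y i - ⟪θ j, x i⟫) ^ 2 +
          2 * (w * R + b) * ∑ j, √(#(B j) * ∑ i ∈ B j, ⟪θ' j - θ j, x i⟫ ^ 2)) := by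
        gcongr
    _ = _ := by ring

/-- Deterministic backbone of the sub-sampling approximation guarantee: the min-loss of
the parameters `θ'` is bounded by the partition-based least-squares loss of the reference
parameters `θ` plus the `Σ_{B_j}`-norm discrepancies. -/
theorem stmt_12 {E : Type*} [NormedAddCommGroup E] [InnerProductSpace ℝ E]
    (n k : ℕ) (hn : 1 ≤ n) (hk : 1 ≤ k)
    (x : Fin n → E) (y : Fin n → ℝ)
    (R b w : ℝ) (hR : 0 ≤ R) (hb : 0 ≤ b) (hw : 0 ≤ w)
    (hx : ∀ i, ‖x i‖ ≤ R) (hy : ∀ i, |y i| ≤ b)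
    (B : Fin k → Finset (Fin n))
    (hdisj : ∀ j j' : Fin k, j ≠ j' → Disjoint (B j) (B j'))
    (hcover : ∀ i : Fin n, ∃ j : Fin k, i ∈ B j)
    (θ θ' : Fin k → E) (hθ : ∀ j, ‖θ j‖ ≤ w) (hθ' : ∀ j, ‖θ' j‖ ≤ w) :
    (1 / n : ℝ) *
        ∑ i, Finset.univ.inf' ⟨⟨0, hk⟩, Finset.mem_univ _⟩
          (fun j => (y i - ⟪θ' j, x i⟫) ^ 2) ≤
      (1 / n : ℝ) * ∑ j, ∑ i ∈ B j, (y i - ⟪θ j, x i⟫) ^ 2 +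
        (2 * (w * R + b) / n) *
          ∑ j, Real.sqrt ((B j).card * ∑ i ∈ B j, ⟪θ' j - θ j, x i⟫ ^ 2) :=
  stmt_12_general n k hk x y R b w hx hy B hdisj hcover θ θ' hθ hθ'
end
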